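/- arXiv:2211.12751 — 3 statements merged into one kernel-verified Lean document; each statement's English description precedes it below -/
import Mathlib

section
/- Let c ∈ ℝ^d, R > 0, let p ∈ ℝ^d satisfy ‖p − c‖ ≤ R, and let u ∈ ℝ^d be nonzero. Then the cosine similarity of the transformed vectors equals the normalized shifted inner product: ⟨I(p, c), U(u)⟩ / (‖I(p, c)‖ · ‖U(u)‖) = ⟨p − c, u⟩ / (R · ‖u‖). -/
open RealInnerProductSpace

/-- The item transformation of SAT: `I(p, c) = (p - c, √(R² - ‖p - c‖²)) ∈ ℝ^{d+1}`. -/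
noncomputable def satItem {d : ℕ} (R : ℝ) (c p : EuclideanSpace ℝ (Fin d)) :
    EuclideanSpace ℝ (Fin (d + 1)) :=
  (EuclideanSpace.equiv (Fin (d + 1)) ℝ).symm
    (Fin.snoc (fun j => (p - c) j) (Real.sqrt (R ^ 2 - ‖p - c‖ ^ 2)))

/-- The user transformation of SAT: `U(u) = ((R/‖u‖) • u, 0) ∈ ℝ^{d+1}`. -/
noncomputable def satUser {d : ℕ} (R : ℝ) (u : EuclideanSpace ℝ (Fin d)) :
    EuclideanSpace ℝ (Fin (d + 1)) :=
  (EuclideanSpace.equiv (Fin (d + 1)) ℝ).symm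
    (Fin.snoc (fun j => (R / ‖u‖) * u j) 0)

lemma sat_sq_sum {d : ℕ} (v : EuclideanSpace ℝ (Fin d)) : ∑ j, (v j) ^ 2 = ‖v‖ ^ 2 := by
  rw [EuclideanSpace.norm_eq, Real.sq_sqrt (by positivity)]
  simp [Real.norm_eq_abs, sq_abs]

lemma sat_item_coord {d : ℕ} (R : ℝ) (c p : EuclideanSpace ℝ (Fin d)) (i : Fin (d + 1)) :
    satItem R c p i =
      (Fin.snoc (fun j => (p - c) j) (Real.sqrt (R ^ 2 - ‖p - c‖ ^ 2)) : Fin (d + 1) → ℝ) i :=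
  rfl

lemma sat_user_coord {d : ℕ} (R : ℝ) (u : EuclideanSpace ℝ (Fin d)) (i : Fin (d + 1)) :
    satUser R u i = (Fin.snoc (fun j => (R / ‖u‖) * u j) 0 : Fin (d + 1) → ℝ) i :=
  rfl

lemma sat_item_norm {d : ℕ} (R : ℝ) (c p : EuclideanSpace ℝ (Fin d))
    (hR : 0 < R) (hp : ‖p - c‖ ≤ R) : ‖satItem R c p‖ = R := by
  have hnn : 0 ≤ R ^ 2 - ‖p - c‖ ^ 2 := by nlinarith [norm_nonneg (p - c)]
  rw [EuclideanSpace.norm_eq]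
  simp only [sat_item_coord, Real.norm_eq_abs, sq_abs, Fin.sum_univ_castSucc,
    Fin.snoc_castSucc, Fin.snoc_last]
  rw [Real.sq_sqrt hnn, sat_sq_sum]
  rw [show ‖p - c‖ ^ 2 + (R ^ 2 - ‖p - c‖ ^ 2) = R ^ 2 by ring]
  exact Real.sqrt_sq hR.le

lemma sat_user_norm {d : ℕ} (R : ℝ) (u : EuclideanSpace ℝ (Fin d))
    (hR : 0 < R) (hu : u ≠ 0) : ‖satUser R u‖ = R := by
  have hun : ‖u‖ ≠ 0 := norm_ne_zero_iff.mpr hu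
  rw [EuclideanSpace.norm_eq]
  simp only [sat_user_coord, Real.norm_eq_abs, sq_abs, Fin.sum_univ_castSucc,
    Fin.snoc_castSucc, Fin.snoc_last]
  have h : ∑ j, (R / ‖u‖ * u j) ^ 2 = (R / ‖u‖) ^ 2 * ‖u‖ ^ 2 := by
    rw [← sat_sq_sum u, Finset.mul_sum]; ring_nf
  rw [h]
  have : (R / ‖u‖) ^ 2 * ‖u‖ ^ 2 + 0 ^ 2 = R ^ 2 := by field_simp; ring
  rw [this]
  exact Real.sqrt_sq hR.le

lemma sat_inner {d : ℕ} (R : ℝ) (c p u : EuclideanSpace ℝ (Fin d)) :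
    ⟪satItem R c p, satUser R u⟫ = (R / ‖u‖) * ⟪p - c, u⟫ := by
  simp [satItem, satUser, PiLp.inner_apply, Fin.sum_univ_castSucc, Fin.snoc, Finset.mul_sum]
  apply Finset.sum_congr rfl
  intros; ring

/-- The cosine similarity of the SAT-transformed vectors equals the normalized shifted
inner product: `⟪I(p,c), U(u)⟫ / (‖I(p,c)‖ · ‖U(u)‖) = ⟪p - c, u⟫ / (R · ‖u‖)`. -/
theorem sat_cosine_similarity {d : ℕ} (R : ℝ) (hR : 0 < R)
    (c p u : EuclideanSpace ℝ (Fin d)) (hp : ‖p - c‖ ≤ R) (hu : u ≠ 0) :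
    ⟪satItem R c p, satUser R u⟫ / (‖satItem R c p‖ * ‖satUser R u‖) =
      ⟪p - c, u⟫ / (R * ‖u‖) := by
  rw [sat_inner, sat_item_norm R c p hR hp, sat_user_norm R u hR hu]
  have hun : ‖u‖ ≠ 0 := norm_ne_zero_iff.mpr hu
  field_simp
end

section
/- (Node-level upper bound.) Let c, q ∈ ℝ^d be nonzero vectors, let φ = θ(q, c) be the angle between q and c, and let ω ∈ [0, π]. Then for every vector u ∈ ℝ^d with ‖u‖ = 1 whose angle with c satisfies θ(u, c) ≤ ω, one has ⟨u, q⟩ ≤ ‖q‖ · cos(max(φ − ω, 0)). Consequently, for any finite set S of unit vectors all of whose angles with c are at most ω, max_{u ∈ S} ⟨u, q⟩ ≤ ‖q‖ · cos(max(φ − ω, 0)). -/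
/-!
By the triangle inequality for angles, `θ(q, c) ≤ θ(q, u) + θ(u, c) ≤ θ(u, q) + ω`, so
`θ(u, q) ≥ max(φ - ω, 0)`. Since cosine is antitone on `[0, π]`,
`⟪u, q⟫ = ‖u‖ ‖q‖ cos θ(u, q) ≤ ‖u‖ ‖q‖ cos(max(φ - ω, 0))`.
-/

open RealInnerProductSpace InnerProductGeometry

namespace InnerProductGeometry

variable {V : Type*} [NormedAddCommGroup V] [InnerProductSpace ℝ V]

theorem max_angle_sub_le_angle_of_angle_le {u c q : V} {ω : ℝ} (h : angle u c ≤ ω) :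
    max (angle q c - ω) 0 ≤ angle u q := by
  have := angle_le_angle_add_angle q u c
  rw [angle_comm q u] at this
  exact max_le (by linarith) (angle_nonneg u q)

theorem inner_le_norm_mul_norm_mul_cos_of_angle_le {u c q : V} {ω : ℝ} (h : angle u c ≤ ω) :
    ⟪u, q⟫ ≤ ‖u‖ * ‖q‖ * Real.cos (max (angle q c - ω) 0) := by
  rw [← cos_angle_mul_norm_mul_norm, mul_comm]
  gcongr
  exact Real.cos_le_cos_of_nonneg_of_le_pi (le_max_right _ _) (angle_le_pi u q)
    (max_angle_sub_le_angle_of_angle_le h)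

end InnerProductGeometry

theorem node_level_upper_bound_general {d : ℕ} (c q : EuclideanSpace ℝ (Fin d)) (ω : ℝ) :
    (∀ u : EuclideanSpace ℝ (Fin d), ‖u‖ = 1 → angle u c ≤ ω →
      ⟪u, q⟫ ≤ ‖q‖ * Real.cos (max (angle q c - ω) 0)) ∧
    (∀ (S : Finset (EuclideanSpace ℝ (Fin d))) (hS : S.Nonempty),
      (∀ u ∈ S, ‖u‖ = 1 ∧ angle u c ≤ ω) →
      S.sup' hS (fun u => ⟪u, q⟫) ≤ ‖q‖ * Real.cos (max (angle q c - ω) 0)) := by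
  have unit_bound : ∀ u : EuclideanSpace ℝ (Fin d), ‖u‖ = 1 → angle u c ≤ ω →
      ⟪u, q⟫ ≤ ‖q‖ * Real.cos (max (angle q c - ω) 0) := fun u hu h => by
    simpa [hu] using inner_le_norm_mul_norm_mul_cos_of_angle_le (q := q) h
  exact ⟨unit_bound, fun S hS hSmem =>
    Finset.sup'_le hS _ fun u hu => unit_bound u (hSmem u hu).1 (hSmem u hu).2⟩

/-- Node-level upper bound of SAH: for nonzero `c, q`, `φ = θ(q, c)`, and `ω ∈ [0, π]`,
every unit vector `u` with `θ(u, c) ≤ ω` satisfies `⟪u, q⟫ ≤ ‖q‖ · cos(max(φ - ω, 0))`;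
consequently, for any finite nonempty set of such unit vectors, the maximum inner product
with `q` is at most `‖q‖ · cos(max(φ - ω, 0))`. -/
theorem node_level_upper_bound {d : ℕ} (c q : EuclideanSpace ℝ (Fin d))
    (hc : c ≠ 0) (hq : q ≠ 0) (ω : ℝ) (hω₀ : 0 ≤ ω) (hωπ : ω ≤ Real.pi) :
    (∀ u : EuclideanSpace ℝ (Fin d), ‖u‖ = 1 → angle u c ≤ ω →
      ⟪u, q⟫ ≤ ‖q‖ * Real.cos (max (angle q c - ω) 0)) ∧
    (∀ (S : Finset (EuclideanSpace ℝ (Fin d))) (hS : S.Nonempty),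
      (∀ u ∈ S, ‖u‖ = 1 ∧ angle u c ≤ ω) →
      S.sup' hS (fun u => ⟪u, q⟫) ≤ ‖q‖ * Real.cos (max (angle q c - ω) 0)) :=
  node_level_upper_bound_general c q ω
end

section
/- (Vector-level upper bound.) Let c, q ∈ ℝ^d be nonzero vectors, let φ = θ(q, c) be the angle between q and c, let u ∈ ℝ^d be a unit vector (‖u‖ = 1), and let θ_u = θ(u, c) be the angle between u and c. Then ⟨u, q⟩ ≤ ‖q‖ · cos(|φ − θ_u|). -/
open RealInnerProductSpace InnerProductGeometry

lemma aux_inner_unit_cos {d : ℕ} (c x : EuclideanSpace ℝ (Fin d)) (hc : c ≠ 0)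
    (hx : ‖x‖ = 1) : ⟪x, (‖c‖⁻¹ : ℝ) • c⟫ = Real.cos (angle x c) := by
  have hcn : ‖c‖ ≠ 0 := norm_ne_zero_iff.mpr hc
  rw [real_inner_smul_right, cos_angle, hx]
  field_simp

lemma aux_norm_sub (d : ℕ) (x v : EuclideanSpace ℝ (Fin d)) (hx : ‖x‖ = 1) (hv : ‖v‖ = 1)
    (θ : ℝ) (hθ : ⟪x, v⟫ = Real.cos θ) (hs : 0 ≤ Real.sin θ) :
    ‖x - Real.cos θ • v‖ = Real.sin θ := by
  have h : ‖x - Real.cos θ • v‖ ^ 2 = Real.sin θ ^ 2 := by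
    rw [← real_inner_self_eq_norm_sq]
    simp only [inner_sub_left, inner_sub_right, real_inner_smul_left, real_inner_smul_right,
      real_inner_self_eq_norm_sq, hx, hv, hθ]
    rw [real_inner_comm x v, hθ, norm_smul, hv, Real.norm_eq_abs]
    nlinarith [sq_abs (Real.cos θ), Real.sin_sq_add_cos_sq θ]
  have := sq_abs (Real.sin θ)
  nlinarith [norm_nonneg (x - Real.cos θ • v), abs_of_nonneg hs]

/-- Vector-level upper bound of SAH: for nonzero `c, q` with `φ = θ(q, c)` and a unit
vector `u` with `θ_u = θ(u, c)`, one has `⟪u, q⟫ ≤ ‖q‖ · cos(|φ - θ_u|)`. -/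
theorem vector_level_upper_bound {d : ℕ} (c q u : EuclideanSpace ℝ (Fin d))
    (hc : c ≠ 0) (hq : q ≠ 0) (hu : ‖u‖ = 1) :
    ⟪u, q⟫ ≤ ‖q‖ * Real.cos |angle q c - angle u c| := by
  have hqn : ‖q‖ ≠ 0 := norm_ne_zero_iff.mpr hq
  set cc : EuclideanSpace ℝ (Fin d) := (‖c‖⁻¹ : ℝ) • c with hcc
  set qq : EuclideanSpace ℝ (Fin d) := (‖q‖⁻¹ : ℝ) • q with hqq
  have hccn : ‖cc‖ = 1 := by
    rw [hcc, norm_smul]; field_simp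
    rw [norm_div, norm_one, norm_norm]; exact mul_one_div_cancel (norm_ne_zero_iff.mpr hc)
  have hqqn : ‖qq‖ = 1 := by
    rw [hqq, norm_smul]; field_simp
    rw [norm_div, norm_one, norm_norm]; exact mul_one_div_cancel hqn
  set θ := angle u c with hθdef
  set φ := angle q c with hφdef
  have h1 : ⟪u, cc⟫ = Real.cos θ := aux_inner_unit_cos c u hc hu
  have h2 : ⟪qq, cc⟫ = Real.cos φ := by
    have := aux_inner_unit_cos c qq hc hqqn
    rw [this, hqq]
    rw [angle_smul_left_of_pos _ _ (by positivity)]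
  have hsθ : 0 ≤ Real.sin θ := Real.sin_nonneg_of_nonneg_of_le_pi (angle_nonneg _ _) (angle_le_pi _ _)
  have hsφ : 0 ≤ Real.sin φ := Real.sin_nonneg_of_nonneg_of_le_pi (angle_nonneg _ _) (angle_le_pi _ _)
  have n1 : ‖u - Real.cos θ • cc‖ = Real.sin θ := aux_norm_sub d u cc hu hccn θ h1 hsθ
  have n2 : ‖qq - Real.cos φ • cc‖ = Real.sin φ := aux_norm_sub d qq cc hqqn hccn φ h2 hsφ
  have key : ⟪u, qq⟫ ≤ Real.cos θ * Real.cos φ + Real.sin θ * Real.sin φ := by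
    have hcs := real_inner_le_norm (u - Real.cos θ • cc) (qq - Real.cos φ • cc)
    rw [n1, n2] at hcs
    have hexp : ⟪u - Real.cos θ • cc, qq - Real.cos φ • cc⟫ =
        ⟪u, qq⟫ - Real.cos θ * Real.cos φ := by
      simp only [inner_sub_left, inner_sub_right, real_inner_smul_left, real_inner_smul_right,
        h1, real_inner_self_eq_norm_sq, hccn]
      rw [real_inner_comm qq cc, h2]
      ring
    linarith [hcs, hexp ▸ hcs]
  have hcosabs : Real.cos |φ - θ| = Real.cos θ * Real.cos φ + Real.sin θ * Real.sin φ := by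
    rw [Real.cos_abs, Real.cos_sub]; ring
  have hq' : ⟪u, q⟫ = ‖q‖ * ⟪u, qq⟫ := by
    rw [hqq, real_inner_smul_right]; field_simp
  rw [hq', hcosabs]
  have : (0:ℝ) ≤ ‖q‖ := norm_nonneg q
  nlinarith [key]
end
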